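/- Let K be a Kekulé cell over a finite set P. For every pair of elements g, g' ∈ K, the Hamming distance dist(g, g') is even and there is a finite set D of pairwise disjoint channels such that g' = g ⊕ (⊕D), dist(g, g') = 2 · #D, and in addition g ⊕ (⊕D') ∈ K for every subset D' ⊆ D. -/

import Mathlib

open scoped symmDiff

namespace Kekule

abbrev Node := ℕ
abbrev Graph := Finset (Finset Node)

/-- `G` is a graph: every edge is a 2-element set of nodes. -/
def IsGraph (G : Graph) : Prop := ∀ e ∈ G, e.card = 2

/-- The nodes of a graph: the elements of its edges. -/
def nodes (G : Graph) : Finset Node := G.biUnion id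

/-- The number of edges of `G` containing `v`. -/
def deg (G : Graph) (v : Node) : ℕ := (G.filter (fun e => v ∈ e)).card

/-- A port is a node contained in exactly one edge. -/
def ports (G : Graph) : Finset Node := (nodes G).filter (fun v => deg G v = 1)

/-- An internal node is a node that is not a port. -/
def internal (G : Graph) : Finset Node := (nodes G).filter (fun v => deg G v ≠ 1)

/-- A Kekulé state of `G`: a subgraph `W ⊆ G` such that every internal node
of `G` lies in exactly one edge of `W`. -/
def IsKekule (G W : Graph) : Prop := W ⊆ G ∧ ∀ v ∈ internal G, deg W v = 1

/-- A curve in `G`: a subgraph `C ⊆ G` such that every node of `C` that is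
internal in `G` lies in exactly two edges of `C`. -/
def IsCurve (G C : Graph) : Prop :=
  C ⊆ G ∧ ∀ v ∈ nodes C, v ∈ internal G → deg C v = 2

/-- `(C, W)` is an alternating curve in `G`: both are subgraphs of `G`,
`C` is a curve in `G`, and `W ∩ C` is a Kekulé state of `C`. -/
def IsAlternating (G C W : Graph) : Prop :=
  W ⊆ G ∧ IsCurve G C ∧ IsKekule C (W ∩ C)

/-- `W|P`: the set of ports in `P` that lie in some edge of `W`. -/
def rest (W : Graph) (P : Finset Node) : Finset Node := P ∩ nodes W

/-- The set of Kekulé port assignments of `G`. -/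
def KP (G : Graph) : Set (Finset Node) :=
  {g | ∃ W, IsKekule G W ∧ rest W (ports G) = g}

/-- A cell `K` over `P` is a Kekulé cell if it is the set of Kekulé port
assignments of some graph with port set `P`. -/
def IsKekuleCell (P : Finset Node) (K : Set (Finset Node)) : Prop :=
  ∃ G, IsGraph G ∧ ports G = P ∧ KP G = K

/-- A channel: a 2-element subset of `P`. -/
def IsChannel (P : Finset Node) (c : Finset Node) : Prop := c ⊆ P ∧ c.card = 2

/-- A port `p` is flexible for a cell `K`. -/
def Flexible (K : Set (Finset Node)) (p : Node) : Prop :=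
  ∃ g ∈ K, ∃ g' ∈ K, p ∈ g ∧ p ∉ g'

/-- Hamming distance between two port assignments. -/
def hdist (k k' : Finset Node) : ℕ := (k ∆ k').card

/-- The Hamming diameter of `K` equals `n`. -/
def HamDiamEq (K : Set (Finset Node)) (n : ℕ) : Prop :=
  (∃ k ∈ K, ∃ k' ∈ K, hdist k k' = n) ∧ ∀ k ∈ K, ∀ k' ∈ K, hdist k k' ≤ n

/-- `G` is connected: nonempty, and any two distinct nodes are joined by a walk. -/
def Connected (G : Graph) : Prop :=
  G.Nonempty ∧ ∀ p ∈ nodes G, ∀ q ∈ nodes G, p ≠ q →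
    ∃ (n : ℕ) (f : ℕ → Node), f 0 = p ∧ f n = q ∧
      ∀ i < n, ({f i, f (i + 1)} : Finset Node) ∈ G

/-- `C` is a simple path between `p` and `q`. -/
def IsSimplePath (C : Graph) (p q : Node) : Prop :=
  Connected C ∧ ports C = {p, q} ∧
    ∀ v ∈ nodes C, v ≠ p → v ≠ q → deg C v = 2

/-- A cycle: a connected graph all of whose nodes lie in exactly two edges. -/
def IsCycle (C : Graph) : Prop :=
  Connected C ∧ ∀ v ∈ nodes C, deg C v = 2

/-- A semi-Kekulé state of `G`: every internal node of `G` lies in an odd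
number of edges of `W`. -/
def IsSemiKekule (G W : Graph) : Prop :=
  W ⊆ G ∧ ∀ v ∈ internal G, deg W v % 2 = 1

/-- The signature of `G`. -/
def sig (G : Graph) : ℕ := (internal G).card % 2

/-- `G` is omniconjugated. -/
def Omniconjugated (G : Graph) : Prop :=
  2 ≤ (ports G).card ∧ KP G = {g | g ⊆ ports G ∧ g.card % 2 = sig G}

instance : Std.Commutative (α := Finset Node) (· ∆ ·) := ⟨symmDiff_comm⟩
instance : Std.Associative (α := Finset Node) (· ∆ ·) := ⟨symmDiff_assoc⟩

/-- The `⊕`-sum of a finite family of port assignments. -/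
def xorSum (D : Finset (Finset Node)) : Finset Node := D.fold (· ∆ ·) ∅ id

/-!
Realise `g` and `g'` by Kekulé states `W` and `W'` and look at `Z = W ∆ W'`. An internal node
of `G` lies in one edge of each state, hence in `0` or `2` edges of `Z`, while a port lies in at
most one; so every node of `Z` has degree at most `2`, and the degree-one nodes of `Z` are exactly
the ports in `g ∆ g'`. Tracing `Z` from such a port runs along a path component ending at another
one: these pairs are the disjoint channels. Swapping `W` for `W'` on any union of components of
`Z` gives again a Kekulé state, whose port assignment is `g` toggled on the channels of the
chosen paths.
-/

open Finset

def edgesAt (Z : Graph) (v : Node) : Graph := Z.filter (fun e => v ∈ e)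

section Graphs

variable {X Y Z : Graph} {v : Node} {e : Finset Node}

lemma deg_eq_card_edgesAt (Z : Graph) (v : Node) : deg Z v = (edgesAt Z v).card := rfl

@[simp] lemma mem_edgesAt : e ∈ edgesAt Z v ↔ e ∈ Z ∧ v ∈ e := mem_filter

lemma mem_nodes : v ∈ nodes Z ↔ ∃ e ∈ Z, v ∈ e := by simp [nodes]

lemma mem_ports : v ∈ ports Z ↔ v ∈ nodes Z ∧ deg Z v = 1 := mem_filter

lemma mem_internal : v ∈ internal Z ↔ v ∈ nodes Z ∧ deg Z v ≠ 1 := mem_filter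

lemma mem_nodes_iff_nonempty_edgesAt : v ∈ nodes Z ↔ (edgesAt Z v).Nonempty := by
  simp [mem_nodes, Finset.Nonempty]

lemma edgesAt_eq_empty_of_notMem_nodes (hv : v ∉ nodes Z) : edgesAt Z v = ∅ := by
  rwa [← not_nonempty_iff_eq_empty, ← mem_nodes_iff_nonempty_edgesAt]

lemma edgesAt_mono (h : X ⊆ Y) (v : Node) : edgesAt X v ⊆ edgesAt Y v :=
  filter_subset_filter _ h

lemma deg_mono (h : X ⊆ Y) (v : Node) : deg X v ≤ deg Y v :=
  card_le_card (edgesAt_mono h v)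

lemma nodes_mono (h : X ⊆ Y) : nodes X ⊆ nodes Y :=
  biUnion_subset_biUnion_of_subset_left _ h

lemma nodes_union (X Y : Graph) : nodes (X ∪ Y) = nodes X ∪ nodes Y := union_biUnion

lemma edgesAt_symmDiff (X Y : Graph) (v : Node) :
    edgesAt (X ∆ Y) v = edgesAt X v ∆ edgesAt Y v := by
  ext e
  simp only [mem_edgesAt, mem_symmDiff]
  tauto

lemma edgesAt_eq_singleton (hv : deg Z v = 1) (he : e ∈ Z) (hve : v ∈ e) :
    edgesAt Z v = {e} := by
  rw [deg_eq_card_edgesAt, card_eq_one] at hv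
  obtain ⟨f, hf⟩ := hv
  have hef : e ∈ edgesAt Z v := mem_edgesAt.mpr ⟨he, hve⟩
  rw [hf, mem_singleton] at hef
  rw [hf, hef]

lemma mem_nodes_iff_of_edgesAt_eq (hXY : X ⊆ Y) (he : edgesAt Y v = {e}) :
    v ∈ nodes X ↔ e ∈ X := by
  have hsub : edgesAt X v ⊆ {e} := he ▸ edgesAt_mono hXY v
  have hve : v ∈ e := (mem_edgesAt.mp (he ▸ mem_singleton_self e)).2
  rw [mem_nodes_iff_nonempty_edgesAt]
  constructor
  · rintro ⟨f, hf⟩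
    exact mem_singleton.mp (hsub hf) ▸ (mem_edgesAt.mp hf).1
  · exact fun heX => ⟨e, mem_edgesAt.mpr ⟨heX, hve⟩⟩

lemma deg_insert (he : e ∉ X) (v : Node) :
    deg (insert e X) v = deg X v + if v ∈ e then 1 else 0 := by
  rw [deg_eq_card_edgesAt, deg_eq_card_edgesAt, edgesAt, filter_insert]
  split_ifs
  · exact card_insert_of_notMem (fun h => he (mem_filter.mp h).1)
  · rfl

lemma edgesAt_insert (e : Finset Node) (X : Graph) (v : Node) :
    edgesAt (insert e X) v = if v ∈ e then insert e (edgesAt X v) else edgesAt X v :=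
  filter_insert _ _ _

lemma nodes_singleton (e : Finset Node) : nodes {e} = e := by
  simp [nodes]

lemma ports_subset_nodes (Z : Graph) : ports Z ⊆ nodes Z := filter_subset _ _

lemma rest_subset (W : Graph) (P : Finset Node) : rest W P ⊆ P := inter_subset_left

lemma nodes_insert (e : Finset Node) (X : Graph) : nodes (insert e X) = e ∪ nodes X := by
  simp [nodes]

lemma ports_singleton (e : Finset Node) : ports {e} = e := by
  ext v
  simp +contextual [mem_ports, nodes, deg, filter_singleton]

lemma deg_le_one_of_notMem_internal (hv : v ∉ internal Z) : deg Z v ≤ 1 := by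
  by_cases hvZ : v ∈ nodes Z
  · exact (not_not.mp fun h => hv (mem_internal.mpr ⟨hvZ, h⟩)).le
  · simp [deg_eq_card_edgesAt, edgesAt_eq_empty_of_notMem_nodes hvZ]

lemma exists_eq_pair_of_card_eq_two {p : Node} (he : e.card = 2) (hp : p ∈ e) :
    ∃ v, v ≠ p ∧ e = {p, v} := by
  obtain ⟨v, hv⟩ := card_eq_one.mp (by rw [card_erase_of_mem hp, he] : (e.erase p).card = 1)
  refine ⟨v, fun h => ?_, ?_⟩
  · simpa [h] using hv.ge (mem_singleton_self v)
  · rw [← insert_erase hp, hv]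

lemma ports_insert_pair {C : Graph} {p v q : Node} (hpC : p ∉ nodes C) (hvp : v ≠ p)
    (hvq : v ≠ q) (hCports : ports C = {v, q}) : ports (insert {p, v} C) = {p, q} := by
  have hCports' : ∀ w, w ∈ nodes C ∧ deg C w = 1 ↔ w = v ∨ w = q := fun w => by
    rw [← mem_ports, hCports, mem_insert, mem_singleton]
  have heC : {p, v} ∉ C := fun h => hpC (mem_nodes.mpr ⟨_, h, mem_insert_self p {v}⟩)
  have hdegCp : deg C p = 0 := by
    rw [deg_eq_card_edgesAt, edgesAt_eq_empty_of_notMem_nodes hpC, card_empty]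
  ext w
  have hw := hCports' w
  simp only [mem_ports, nodes_insert, deg_insert heC, mem_union, mem_insert,
    mem_singleton] at hw ⊢
  by_cases hwp : w = p
  · subst hwp
    simp [hdegCp]
  by_cases hwv : w = v
  · subst hwv
    have := ((hCports' w).mpr (Or.inl rfl)).2
    simp_all
  · simp_all

end Graphs

def IsUnionOfComponents (Z C : Graph) : Prop :=
  C ⊆ Z ∧ ∀ v ∈ nodes C, edgesAt C v = edgesAt Z v

namespace IsUnionOfComponents

variable {Z C C' : Graph}

lemma empty (Z : Graph) : IsUnionOfComponents Z ∅ :=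
  ⟨empty_subset _, by simp [nodes]⟩

lemma union (hC : IsUnionOfComponents Z C) (hC' : IsUnionOfComponents Z C') :
    IsUnionOfComponents Z (C ∪ C') := by
  refine ⟨union_subset hC.1 hC'.1, fun v hv => ?_⟩
  rw [nodes_union, mem_union] at hv
  rw [edgesAt, filter_union, ← edgesAt, ← edgesAt]
  rcases hv with hv | hv
  · rw [hC.2 v hv, union_eq_left.mpr (edgesAt_mono hC'.1 v)]
  · rw [hC'.2 v hv, union_eq_right.mpr (edgesAt_mono hC.1 v)]

lemma disjoint_nodes_sdiff (hC : IsUnionOfComponents Z C) :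
    Disjoint (nodes C) (nodes (Z \ C)) := by
  refine disjoint_left.mpr fun v hvC hv => ?_
  obtain ⟨e, he, hve⟩ := mem_nodes.mp hv
  have : e ∈ edgesAt C v := hC.2 v hvC ▸ mem_edgesAt.mpr ⟨(mem_sdiff.mp he).1, hve⟩
  exact (mem_sdiff.mp he).2 (mem_edgesAt.mp this).1

lemma sdiff (hC : IsUnionOfComponents Z C) : IsUnionOfComponents Z (Z \ C) := by
  refine ⟨sdiff_subset, fun v hv => subset_antisymm (edgesAt_mono sdiff_subset v) ?_⟩
  intro e he
  obtain ⟨heZ, hve⟩ := mem_edgesAt.mp he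
  refine mem_edgesAt.mpr ⟨mem_sdiff.mpr ⟨heZ, fun heC => ?_⟩, hve⟩
  exact disjoint_left.mp hC.disjoint_nodes_sdiff (mem_nodes.mpr ⟨e, heC, hve⟩) hv

lemma of_sdiff (hC : IsUnionOfComponents Z C) (hC' : IsUnionOfComponents (Z \ C) C') :
    IsUnionOfComponents Z C' :=
  ⟨hC'.1.trans sdiff_subset,
    fun v hv => (hC'.2 v hv).trans (hC.sdiff.2 v (nodes_mono hC'.1 hv))⟩

lemma ports_eq (hC : IsUnionOfComponents Z C) : ports C = ports Z ∩ nodes C := by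
  ext v
  simp only [mem_inter, mem_ports, deg_eq_card_edgesAt]
  constructor
  · rintro ⟨hv, hdeg⟩
    exact ⟨⟨nodes_mono hC.1 hv, hC.2 v hv ▸ hdeg⟩, hv⟩
  · rintro ⟨⟨-, hdeg⟩, hv⟩
    exact ⟨hv, hC.2 v hv ▸ hdeg⟩

lemma ports_eq_rest {P : Finset Node} (hC : IsUnionOfComponents Z C) (hZ : ports Z = rest Z P) :
    ports C = rest C P := by
  rw [hC.ports_eq, hZ, rest, rest, inter_assoc, inter_eq_right.mpr (nodes_mono hC.1)]

lemma ports_union (hC : IsUnionOfComponents Z C) (hC' : IsUnionOfComponents Z C') :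
    ports (C ∪ C') = ports C ∪ ports C' := by
  rw [(hC.union hC').ports_eq, hC.ports_eq, hC'.ports_eq, nodes_union, inter_union_distrib_left]

lemma singleton {e : Finset Node} (he : e ∈ Z)
    (hdeg : ∀ w ∈ e, deg Z w = 1) : IsUnionOfComponents Z {e} := by
  refine ⟨singleton_subset_iff.mpr he, fun w hw => ?_⟩
  rw [nodes_singleton] at hw
  rw [edgesAt_eq_singleton (hdeg w hw) he hw, edgesAt, filter_singleton, if_pos hw]

lemma insert_of_erase {p v : Node} (hpe : edgesAt Z p = {{p, v}})
    (hC : IsUnionOfComponents (Z.erase {p, v}) C) (hpC : p ∉ nodes C) (hvC : v ∈ nodes C) :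
    IsUnionOfComponents Z (insert {p, v} C) := by
  have hp_e : p ∈ ({p, v} : Finset Node) := mem_insert_self p {v}
  have heZ : {p, v} ∈ Z := (mem_edgesAt.mp (hpe ▸ mem_singleton_self _)).1
  refine ⟨insert_subset heZ (hC.1.trans (erase_subset _ _)), fun w hw => ?_⟩
  by_cases hwC : w ∈ nodes C
  · rw [← insert_erase heZ]
    simp only [edgesAt_insert, hC.2 w hwC]
  · rw [nodes_insert, mem_union, mem_insert, mem_singleton] at hw
    obtain rfl : w = p := by
      rcases hw with (h | rfl) | h
      · exact h
      · exact absurd hvC hwC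
      · exact absurd h hwC
    rw [hpe, edgesAt_insert, if_pos hp_e, edgesAt_eq_empty_of_notMem_nodes hpC]
    rfl

end IsUnionOfComponents

theorem exists_component_ports_eq_pair {Z : Graph} (hZ : IsGraph Z) (hdeg : ∀ v, deg Z v ≤ 2)
    {p : Node} (hp : deg Z p = 1) :
    ∃ q C, p ≠ q ∧ IsUnionOfComponents Z C ∧ ports C = {p, q} := by
  induction Z using Finset.strongInduction generalizing p with
  | H Z ih =>
  rw [deg_eq_card_edgesAt, card_eq_one] at hp
  obtain ⟨e, hpe⟩ := hp
  obtain ⟨heZ, hp_e⟩ := mem_edgesAt.mp (hpe ▸ mem_singleton_self e)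
  obtain ⟨v, hvp, rfl⟩ := exists_eq_pair_of_card_eq_two (hZ e heZ) hp_e
  have hv_e : v ∈ ({p, v} : Finset Node) := mem_insert_of_mem (mem_singleton_self v)
  by_cases hv : deg Z v = 1
  · refine ⟨v, {{p, v}}, hvp.symm, IsUnionOfComponents.singleton heZ fun w hw => ?_,
      ports_singleton _⟩
    rcases mem_insert.mp hw with rfl | hw
    · rw [deg_eq_card_edgesAt, hpe, card_singleton]
    · rwa [mem_singleton.mp hw]
  have hv' : deg (Z.erase {p, v}) v = 1 := by
    have : 0 < deg Z v := card_pos.mpr ⟨_, mem_edgesAt.mpr ⟨heZ, hv_e⟩⟩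
    rw [deg_eq_card_edgesAt, edgesAt, filter_erase, ← edgesAt,
      card_erase_of_mem (mem_edgesAt.mpr ⟨heZ, hv_e⟩), ← deg_eq_card_edgesAt]
    have := hdeg v
    omega
  obtain ⟨q, C, hvq, hC, hCports⟩ := ih (Z.erase {p, v}) (erase_ssubset heZ)
    (fun f hf => hZ f (mem_of_mem_erase hf))
    (fun w => (deg_mono (erase_subset _ _) w).trans (hdeg w)) hv'
  have hpC : p ∉ nodes C := by
    intro h
    have := mem_nodes_iff_nonempty_edgesAt.mp (nodes_mono hC.1 h)
    rw [edgesAt, filter_erase, ← edgesAt, hpe, erase_singleton] at this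
    exact not_nonempty_empty this
  have hC_ends : ∀ {w}, w ∈ ({v, q} : Finset Node) → w ∈ nodes C :=
    fun hw => ports_subset_nodes C (hCports ▸ hw)
  exact ⟨q, _, fun h => hpC (h ▸ hC_ends (mem_insert_of_mem (mem_singleton_self q))),
    hC.insert_of_erase hpe hpC (hC_ends (mem_insert_self v {q})),
    ports_insert_pair hpC hvp hvq hCports⟩

theorem exists_channel_decomposition {Z : Graph} (hZ : IsGraph Z) (hdeg : ∀ v, deg Z v ≤ 2) :
    ∃ D : Finset (Finset Node), (∀ c ∈ D, c.card = 2) ∧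
      (D : Set (Finset Node)).Pairwise Disjoint ∧ D.biUnion id = ports Z ∧
      ∀ D' ⊆ D, ∃ C, IsUnionOfComponents Z C ∧ ports C = D'.biUnion id := by
  induction Z using Finset.strongInduction with
  | H Z ih =>
  by_cases hports : ports Z = ∅
  · refine ⟨∅, by simp, by simp, by simp [hports], fun D' hD' => ⟨∅, .empty Z, ?_⟩⟩
    simp [subset_empty.mp hD', ports, nodes]
  obtain ⟨p, hp⟩ := nonempty_iff_ne_empty.mpr hports
  obtain ⟨q, C, hpq, hC, hCports⟩ := exists_component_ports_eq_pair hZ hdeg (mem_ports.mp hp).2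
  have hCne : C.Nonempty := by
    have hpC : p ∈ nodes C := ports_subset_nodes C (hCports ▸ mem_insert_self p {q})
    obtain ⟨e, he, -⟩ := mem_nodes.mp hpC
    exact ⟨e, he⟩
  obtain ⟨D₀, hD₀card, hD₀disj, hD₀union, hD₀sub⟩ :=
    ih (Z \ C) (sdiff_ssubset hC.1 hCne) (fun e he => hZ e (sdiff_subset he))
      (fun v => (deg_mono sdiff_subset v).trans (hdeg v))
  have hZports : ports C ∪ ports (Z \ C) = ports Z := by
    rw [← hC.ports_union hC.sdiff, union_sdiff_of_subset hC.1]
  have hdisj : ∀ d ∈ D₀, Disjoint {p, q} d := fun d hd =>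
    hCports ▸ (hC.disjoint_nodes_sdiff.mono (ports_subset_nodes C)
      (ports_subset_nodes _)).mono_right (hD₀union ▸ subset_biUnion_of_mem id hd)
  refine ⟨insert {p, q} D₀, ?_, ?_, ?_, fun D' hD' => ?_⟩
  · simpa [card_pair hpq] using hD₀card
  · rw [coe_insert, Set.pairwise_insert]
    exact ⟨hD₀disj, fun d hd _ => ⟨hdisj d hd, (hdisj d hd).symm⟩⟩
  · rw [biUnion_insert, hD₀union, id, ← hCports, hZports]
  obtain ⟨C₀, hC₀, hC₀ports⟩ := hD₀sub (D'.erase {p, q}) (subset_insert_iff.mp hD')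
  by_cases hpqD' : {p, q} ∈ D'
  · refine ⟨C ∪ C₀, hC.union (hC.of_sdiff hC₀), ?_⟩
    rw [hC.ports_union (hC.of_sdiff hC₀), hC₀ports, hCports]
    conv_rhs => rw [← insert_erase hpqD', biUnion_insert]
    rfl
  · exact ⟨C₀, hC.of_sdiff hC₀, by rw [hC₀ports, erase_eq_of_notMem hpqD']⟩

lemma xorSum_eq_biUnion {D : Finset (Finset Node)}
    (hD : (D : Set (Finset Node)).Pairwise Disjoint) : xorSum D = D.biUnion id := by
  induction D using Finset.induction_on with
  | empty => rfl
  | insert c D hc ih =>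
    rw [coe_insert, Set.pairwise_insert] at hD
    rw [xorSum, fold_insert hc, ← xorSum, ih hD.1, biUnion_insert, id]
    exact Disjoint.symmDiff_eq_sup ((disjoint_biUnion_right _ _ _).mpr fun d hd =>
      (hD.2 d hd (ne_of_mem_of_not_mem hd hc).symm).1)

lemma card_biUnion_of_card_eq_two {D : Finset (Finset Node)} (hD : ∀ c ∈ D, c.card = 2)
    (hdisj : (D : Set (Finset Node)).Pairwise Disjoint) : (D.biUnion id).card = 2 * D.card := by
  rw [card_biUnion (t := id) hdisj]
  simp only [id]
  rw [sum_congr rfl (g := fun _ => 2) hD, sum_const, smul_eq_mul, mul_comm]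

section Kekule

variable {G W W' : Graph}

lemma IsKekule.symmDiff_subset (hW : IsKekule G W) (hW' : IsKekule G W') : W ∆ W' ⊆ G :=
  symmDiff_subset_union.trans (union_subset hW.1 hW'.1)

lemma rest_symmDiff {X Y : Graph} (hX : X ⊆ G) (hY : Y ⊆ G) :
    rest (X ∆ Y) (ports G) = rest X (ports G) ∆ rest Y (ports G) := by
  ext r
  by_cases hr : r ∈ ports G
  · obtain ⟨e, he⟩ := card_eq_one.mp (mem_ports.mp hr).2
    simp only [rest, mem_symmDiff, mem_inter, hr, true_and, mem_nodes_iff_of_edgesAt_eq hX he,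
      mem_nodes_iff_of_edgesAt_eq hY he,
      mem_nodes_iff_of_edgesAt_eq (symmDiff_subset_union.trans (union_subset hX hY)) he]
  · simp [rest, hr, mem_symmDiff]

lemma deg_symmDiff_ne_one (hW : IsKekule G W) (hW' : IsKekule G W') {v : Node}
    (hv : v ∈ internal G) : deg (W ∆ W') v ≠ 1 := by
  have h := hW.2 v hv
  have h' := hW'.2 v hv
  rw [deg_eq_card_edgesAt, card_eq_one] at h h'
  obtain ⟨a, ha⟩ := h
  obtain ⟨b, hb⟩ := h'
  rw [deg_eq_card_edgesAt, edgesAt_symmDiff, ha, hb]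
  by_cases hab : a = b
  · simp [hab]
  · rw [symmDiff_eq_sup_sdiff_inf]
    simp [hab, card_pair hab]

lemma deg_symmDiff_le_two (hW : IsKekule G W) (hW' : IsKekule G W') (v : Node) :
    deg (W ∆ W') v ≤ 2 := by
  by_cases hv : v ∈ internal G
  · calc deg (W ∆ W') v ≤ (edgesAt W v ∪ edgesAt W' v).card := by
          rw [deg_eq_card_edgesAt, edgesAt_symmDiff]; exact card_le_card symmDiff_subset_union
      _ ≤ deg W v + deg W' v := card_union_le _ _
      _ = 2 := by rw [hW.2 v hv, hW'.2 v hv]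
  · exact (deg_mono (hW.symmDiff_subset hW') v).trans
      ((deg_le_one_of_notMem_internal hv).trans one_le_two)

lemma ports_symmDiff (hW : IsKekule G W) (hW' : IsKekule G W') :
    ports (W ∆ W') = rest (W ∆ W') (ports G) := by
  ext v
  rw [mem_ports, rest, mem_inter, mem_ports]
  constructor
  · rintro ⟨hv, hdeg⟩
    have hvG := nodes_mono (hW.symmDiff_subset hW') hv
    refine ⟨⟨hvG, by_contra fun h => ?_⟩, hv⟩
    exact deg_symmDiff_ne_one hW hW' (mem_internal.mpr ⟨hvG, h⟩) hdeg
  · rintro ⟨⟨-, hdeg⟩, hv⟩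
    exact ⟨hv, le_antisymm ((deg_mono (hW.symmDiff_subset hW') v).trans hdeg.le)
      (card_pos.mpr (mem_nodes_iff_nonempty_edgesAt.mp hv))⟩

lemma IsKekule.symmDiff_of_isUnionOfComponents (hW : IsKekule G W) (hW' : IsKekule G W')
    {C : Graph} (hC : IsUnionOfComponents (W ∆ W') C) : IsKekule G (W ∆ C) := by
  refine ⟨symmDiff_subset_union.trans (union_subset hW.1 (hC.1.trans (hW.symmDiff_subset hW'))),
    fun v hv => ?_⟩
  rw [deg_eq_card_edgesAt, edgesAt_symmDiff]
  by_cases hvC : v ∈ nodes C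
  · rw [hC.2 v hvC, edgesAt_symmDiff, symmDiff_symmDiff_cancel_left]
    exact hW'.2 v hv
  · rw [edgesAt_eq_empty_of_notMem_nodes hvC, ← bot_eq_empty, symmDiff_bot]
    exact hW.2 v hv

end Kekule

/-- Any two elements of a Kekulé cell differ by a set of disjoint
channels, with all intermediate combinations also in the cell. -/
theorem statement5 (P : Finset Node) (K : Set (Finset Node))
    (hK : IsKekuleCell P K) (g g' : Finset Node) (hg : g ∈ K) (hg' : g' ∈ K) :
    Even (hdist g g') ∧
    ∃ D : Finset (Finset Node),
      (∀ c ∈ D, IsChannel P c) ∧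
      (D : Set (Finset Node)).Pairwise Disjoint ∧
      g' = g ∆ xorSum D ∧
      hdist g g' = 2 * D.card ∧
      ∀ D' ⊆ D, g ∆ xorSum D' ∈ K := by
  obtain ⟨G, hG, rfl, rfl⟩ := hK
  obtain ⟨W, hW, rfl⟩ := hg
  obtain ⟨W', hW', rfl⟩ := hg'
  have hZports := ports_symmDiff hW hW'
  have hgg' : ports (W ∆ W') = rest W (ports G) ∆ rest W' (ports G) := by
    rw [hZports, rest_symmDiff hW.1 hW'.1]
  obtain ⟨D, hcard, hdisj, hunion, hsub⟩ :=
    exists_channel_decomposition (fun e he => hG e (hW.symmDiff_subset hW' he))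
      (deg_symmDiff_le_two hW hW')
  have hdist_eq : hdist (rest W (ports G)) (rest W' (ports G)) = 2 * D.card := by
    rw [hdist, ← hgg', ← hunion, card_biUnion_of_card_eq_two hcard hdisj]
  refine ⟨⟨D.card, by omega⟩, D, fun c hc => ⟨?_, hcard c hc⟩, hdisj, ?_, hdist_eq,
    fun D' hD' => ?_⟩
  · exact (subset_biUnion_of_mem id hc).trans (hunion ▸ hZports ▸ rest_subset _ _)
  · rw [xorSum_eq_biUnion hdisj, hunion, hgg', symmDiff_symmDiff_cancel_left]
  · obtain ⟨C, hC, hCports⟩ := hsub D' hD'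
    refine ⟨W ∆ C, hW.symmDiff_of_isUnionOfComponents hW' hC, ?_⟩
    rw [rest_symmDiff hW.1 (hC.1.trans (hW.symmDiff_subset hW')), ← hC.ports_eq_rest hZports,
      hCports, xorSum_eq_biUnion (hdisj.mono (coe_subset.mpr hD'))]
end Kekule
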